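/- For every real number δ with 0 < δ ≤ 1/2, the inequality ∫_{−π/2}^{π/2} (1 + δ·ξ(θ))^{−1/2} dθ ≥ π·(1 − δ)^{−1/2} holds. -/

import Mathlib

/-
On `(-π/2, π/2)` the function `ξ` is the derivative of `θ + (θ² - π²/4) tan θ`, which tends to
`∓π/2` at `±π/2`; hence `∫ ξ = -π` and `1 + δ ξ` has mean `1 - δ`. Since `y ↦ y^(-1/2)` is convex,
integrating its tangent line at `1 - δ` (Jensen) gives the claim, provided `1 + δ ξ` stays
bounded away from `0`. That follows from `1 - π²/4 ≤ ξ ≤ 0`: the upper bound from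
`cos θ ≤ π/2 - |θ|`, the lower one from the monotonicity of `2θ cot θ + θ²/sin² θ` on `(0, π/2]`,
whose derivative is `2 cos θ (sin² θ - θ²)/sin³ θ ≤ 0`.
-/

open Real Set Filter Topology

/-- The test function ξ(θ) = (cos²θ + 2θ·sinθ·cosθ + θ² − π²/4)/cos²θ. -/
noncomputable def xi (θ : ℝ) : ℝ :=
  (Real.cos θ ^ 2 + 2 * θ * Real.sin θ * Real.cos θ + θ ^ 2 - Real.pi ^ 2 / 4) /
    Real.cos θ ^ 2

open MeasureTheory

lemma hasDerivAt_two_mul_cot_add_sq_div_sin_sq {x : ℝ} (hx : sin x ≠ 0) :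
    HasDerivAt (fun θ => 2 * θ * cos θ / sin θ + θ ^ 2 / sin θ ^ 2)
      (2 * cos x * (sin x ^ 2 - x ^ 2) / sin x ^ 3) x := by
  have h := ((((hasDerivAt_id x).const_mul 2).mul (hasDerivAt_cos x)).div (hasDerivAt_sin x) hx).add
    ((hasDerivAt_pow 2 x).div ((hasDerivAt_sin x).pow 2) (pow_ne_zero 2 hx))
  refine h.congr_deriv ?_
  simp only [id, Pi.mul_apply, Pi.pow_apply, Nat.cast_ofNat]
  field_simp
  linear_combination (-(sin x ^ 2 * x)) * sin_sq_add_cos_sq x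

lemma antitoneOn_two_mul_cot_add_sq_div_sin_sq :
    AntitoneOn (fun θ => 2 * θ * cos θ / sin θ + θ ^ 2 / sin θ ^ 2) (Ioc 0 (π / 2)) := by
  have hsin : ∀ x ∈ Ioc 0 (π / 2), 0 < sin x := fun x hx =>
    sin_pos_of_pos_of_lt_pi hx.1 (by linarith [hx.2, pi_pos])
  refine antitoneOn_of_deriv_nonpos (convex_Ioc 0 (π / 2)) (fun x hx => ?_) (fun x hx => ?_)
    (fun x hx => ?_)
  · exact (hasDerivAt_two_mul_cot_add_sq_div_sin_sq
      (hsin x hx).ne').continuousAt.continuousWithinAt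
  all_goals rw [interior_Ioc] at hx
  · exact (hasDerivAt_two_mul_cot_add_sq_div_sin_sq
      (hsin x (Ioo_subset_Ioc_self hx)).ne').differentiableAt.differentiableWithinAt
  · have hs := hsin x (Ioo_subset_Ioc_self hx)
    rw [(hasDerivAt_two_mul_cot_add_sq_div_sin_sq hs.ne').deriv]
    have hc : 0 ≤ cos x := cos_nonneg_of_mem_Icc ⟨by linarith [hx.1, pi_pos], hx.2.le⟩
    have hsx : sin x ^ 2 ≤ x ^ 2 := pow_le_pow_left₀ hs.le (sin_le hx.1.le) 2
    exact div_nonpos_of_nonpos_of_nonneg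
      (mul_nonpos_of_nonneg_of_nonpos (by positivity) (by linarith)) (by positivity)

lemma pi_sq_div_four_mul_sin_sq_le {θ : ℝ} (hθ : θ ∈ Icc (-(π / 2)) (π / 2)) :
    π ^ 2 / 4 * sin θ ^ 2 ≤ 2 * θ * sin θ * cos θ + θ ^ 2 := by
  wlog h0 : 0 < θ generalizing θ
  · rcases (not_lt.1 h0).eq_or_lt with rfl | hneg
    · simp
    · simpa [sin_neg, cos_neg] using
        this ⟨by linarith [hθ.2], by linarith [hθ.1]⟩ (neg_pos.2 hneg)
  have hs : 0 < sin θ := sin_pos_of_pos_of_lt_pi h0 (by linarith [hθ.2, pi_pos])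
  have hk := antitoneOn_two_mul_cot_add_sq_div_sin_sq ⟨h0, hθ.2⟩
    ⟨by linarith [pi_pos], le_rfl⟩ hθ.2
  simp only [sin_pi_div_two, cos_pi_div_two, mul_zero, one_pow, div_one, zero_add] at hk
  calc π ^ 2 / 4 * sin θ ^ 2 = (π / 2) ^ 2 * sin θ ^ 2 := by ring
    _ ≤ (2 * θ * cos θ / sin θ + θ ^ 2 / sin θ ^ 2) * sin θ ^ 2 := by gcongr
    _ = 2 * θ * sin θ * cos θ + θ ^ 2 := by field_simp

lemma one_sub_pi_sq_div_four_le_xi {θ : ℝ} (hθ : θ ∈ Icc (-(π / 2)) (π / 2)) :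
    1 - π ^ 2 / 4 ≤ xi θ := by
  have hc : 0 ≤ cos θ := cos_nonneg_of_mem_Icc hθ
  rcases hc.eq_or_lt with hc0 | hc0
  · -- `xi θ = 0` at `θ = ±π/2`, by the convention `x / 0 = 0`
    simp [xi, ← hc0]
    nlinarith [pi_gt_three]
  · rw [xi, le_div_iff₀ (by positivity)]
    nlinarith [pi_sq_div_four_mul_sin_sq_le hθ, sin_sq_add_cos_sq θ]

lemma xi_nonpos {θ : ℝ} (hθ : θ ∈ Icc (-(π / 2)) (π / 2)) : xi θ ≤ 0 := by
  have hc : 0 ≤ cos θ := cos_nonneg_of_mem_Icc hθ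
  have habs : |θ| ≤ π / 2 := abs_le.2 hθ
  have hcos : cos θ ≤ π / 2 - |θ| := by
    rw [← cos_abs, ← sin_pi_div_two_sub]
    exact sin_le (by linarith)
  have hsin : θ * sin θ ≤ |θ| := by
    refine (le_abs_self _).trans ?_
    rw [abs_mul]
    exact mul_le_of_le_one_right (abs_nonneg θ) (abs_sin_le_one θ)
  refine div_nonpos_of_nonpos_of_nonneg ?_ (sq_nonneg _)
  nlinarith [mul_le_mul_of_nonneg_right hsin hc, sq_abs θ, abs_nonneg θ]

lemma intervalIntegrable_of_norm_le {E : Type*} [NormedAddCommGroup E] {f : ℝ → E} {a b C : ℝ}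
    (hab : a ≤ b)
    (hf : AEStronglyMeasurable f (volume.restrict (Ioc a b)))
    (hfC : ∀ x ∈ Icc a b, ‖f x‖ ≤ C) : IntervalIntegrable f volume a b := by
  rw [intervalIntegrable_iff_integrableOn_Ioc_of_le hab]
  refine IntegrableOn.of_bound measure_Ioc_lt_top hf C ?_
  filter_upwards [ae_restrict_mem measurableSet_Ioc] with x hx
  exact hfC x (Ioc_subset_Icc_self hx)

lemma xi_intervalIntegrable :
    IntervalIntegrable xi volume (-(π / 2)) (π / 2) := by
  refine intervalIntegrable_of_norm_le (C := π ^ 2 / 4 - 1) (by linarith [pi_pos])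
    (Measurable.aestronglyMeasurable (by unfold xi; fun_prop)) fun θ hθ => ?_
  rw [Real.norm_eq_abs, abs_le]
  constructor <;> linarith [xi_nonpos hθ, one_sub_pi_sq_div_four_le_xi hθ]

noncomputable def xiPrimitive (θ : ℝ) : ℝ := θ + (θ ^ 2 - π ^ 2 / 4) * tan θ

lemma hasDerivAt_xiPrimitive {θ : ℝ} (hθ : cos θ ≠ 0) : HasDerivAt xiPrimitive (xi θ) θ := by
  have h := (hasDerivAt_id θ).add
    (((hasDerivAt_pow 2 θ).sub_const (π ^ 2 / 4)).mul (hasDerivAt_tan hθ))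
  refine h.congr_deriv ?_
  rw [xi, tan_eq_sin_div_cos]
  field_simp
  ring

lemma tendsto_sub_div_cos {a : ℝ} (ha : cos a = 0) :
    Tendsto (fun θ => (θ - a) / cos θ) (𝓝[≠] a) (𝓝 (-(sin a)⁻¹)) := by
  have hsin : sin a ≠ 0 := fun hs => by simpa [hs, ha] using sin_sq_add_cos_sq a
  have h := hasDerivAt_iff_tendsto_slope.mp (hasDerivAt_cos a)
  simpa [slope_def_field, ha] using h.inv₀ (neg_ne_zero.2 hsin)

lemma tendsto_xiPrimitive {a : ℝ} (ha : a = π / 2 ∨ a = -(π / 2)) :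
    Tendsto xiPrimitive (𝓝[≠] a) (𝓝 (-a)) := by
  have hcos : cos a = 0 := by rcases ha with rfl | rfl <;> simp
  have hsin : sin a ≠ 0 := by rcases ha with rfl | rfl <;> simp
  have ha2 : a ^ 2 = π ^ 2 / 4 := by rcases ha with rfl | rfl <;> ring
  have h : Tendsto (fun θ => θ + (θ + a) * sin θ * ((θ - a) / cos θ)) (𝓝[≠] a)
      (𝓝 (a + (a + a) * sin a * -(sin a)⁻¹)) := by
    refine Tendsto.add ?_ (Tendsto.mul (Tendsto.mul ?_ ?_) (tendsto_sub_div_cos hcos))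
    all_goals exact Continuous.tendsto' (by fun_prop) _ _ rfl |>.mono_left nhdsWithin_le_nhds
  convert h using 2 with θ
  · rw [xiPrimitive, tan_eq_sin_div_cos]
    linear_combination (sin θ / cos θ) * ha2
  · field_simp
    ring

lemma integral_xi : ∫ θ in (-(π / 2))..(π / 2), xi θ = -π := by
  rw [intervalIntegral.integral_eq_sub_of_hasDerivAt_of_tendsto (by linarith [pi_pos])
    (fun θ hθ => hasDerivAt_xiPrimitive (cos_pos_of_mem_Ioo hθ).ne') xi_intervalIntegrable
    ((tendsto_xiPrimitive (Or.inr rfl)).mono_left (nhdsGT_le_nhdsNE _))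
    ((tendsto_xiPrimitive (Or.inl rfl)).mono_left (nhdsLT_le_nhdsNE _))]
  ring

lemma sq_rpow_neg_half {u : ℝ} (hu : 0 ≤ u) : (u ^ 2) ^ (-(1 : ℝ) / 2) = u⁻¹ := by
  rw [← rpow_natCast, ← rpow_mul hu]
  norm_num [rpow_neg_one]

lemma rpow_neg_half_tangent_le {m y : ℝ} (hm : 0 < m) (hy : 0 < y) :
    3 / 2 * m ^ (-(1 : ℝ) / 2) - m ^ (-(1 : ℝ) / 2) / (2 * m) * y ≤ y ^ (-(1 : ℝ) / 2) := by
  obtain ⟨s, hs, rfl⟩ : ∃ s, 0 < s ∧ s ^ 2 = y := ⟨√y, sqrt_pos.2 hy, sq_sqrt hy.le⟩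
  obtain ⟨t, ht, rfl⟩ : ∃ t, 0 < t ∧ t ^ 2 = m := ⟨√m, sqrt_pos.2 hm, sq_sqrt hm.le⟩
  rw [sq_rpow_neg_half hs.le, sq_rpow_neg_half ht.le, ← sub_nonneg]
  have h : s⁻¹ - (3 / 2 * t⁻¹ - t⁻¹ / (2 * t ^ 2) * s ^ 2) =
      (s - t) ^ 2 * (s + 2 * t) / (2 * t ^ 3 * s) := by
    field_simp
    ring
  rw [h]
  positivity

lemma mul_rpow_neg_half_le_integral {f : ℝ → ℝ} {a b c m : ℝ} (hab : a ≤ b) (hc : 0 < c)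
    (hfc : ∀ x ∈ Icc a b, c ≤ f x) (hf : IntervalIntegrable f volume a b) (hm : 0 < m)
    (hmean : ∫ x in a..b, f x = (b - a) * m) :
    (b - a) * m ^ (-(1 : ℝ) / 2) ≤ ∫ x in a..b, f x ^ (-(1 : ℝ) / 2) := by
  set M := m ^ (-(1 : ℝ) / 2)
  have hfpos : ∀ x ∈ Icc a b, 0 < f x := fun x hx => hc.trans_le (hfc x hx)
  have hrpow : IntervalIntegrable (fun x => f x ^ (-(1 : ℝ) / 2)) volume a b := by
    refine intervalIntegrable_of_norm_le (C := c ^ (-(1 : ℝ) / 2)) hab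
      (hf.1.aestronglyMeasurable.aemeasurable.pow_const _).aestronglyMeasurable fun x hx => ?_
    rw [Real.norm_of_nonneg (rpow_nonneg (hfpos x hx).le _)]
    exact rpow_le_rpow_of_nonpos hc (hfc x hx) (by norm_num)
  have htangent : IntervalIntegrable (fun x => 3 / 2 * M - M / (2 * m) * f x) volume a b :=
    intervalIntegrable_const.sub (hf.const_mul _)
  calc (b - a) * M = ∫ x in a..b, (3 / 2 * M - M / (2 * m) * f x) := by
        rw [intervalIntegral.integral_sub intervalIntegrable_const (hf.const_mul _),
          intervalIntegral.integral_const, intervalIntegral.integral_const_mul, hmean, smul_eq_mul]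
        field_simp
        ring
    _ ≤ ∫ x in a..b, f x ^ (-(1 : ℝ) / 2) :=
        intervalIntegral.integral_mono_on hab htangent hrpow fun x hx =>
          rpow_neg_half_tangent_le hm (hfpos x hx)

theorem z_inv_sqrt_integral_full_general (δ : ℝ) (hδ1 : δ ≤ 1 / 2) :
    ∫ θ in (-(Real.pi / 2))..(Real.pi / 2), (1 + δ * xi θ) ^ (-(1 : ℝ) / 2) ≥
      Real.pi * (1 - δ) ^ (-(1 : ℝ) / 2) := by
  have hbound : ∀ θ ∈ Icc (-(π / 2)) (π / 2), 3 / 2 - π ^ 2 / 8 ≤ 1 + δ * xi θ := fun θ hθ => by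
    linarith [mul_nonneg_of_nonpos_of_nonpos (sub_nonpos.2 hδ1) (xi_nonpos hθ),
      one_sub_pi_sq_div_four_le_xi hθ]
  have hmean : ∫ θ in (-(π / 2))..(π / 2), (1 + δ * xi θ) = (π / 2 - -(π / 2)) * (1 - δ) := by
    rw [intervalIntegral.integral_add intervalIntegrable_const (xi_intervalIntegrable.const_mul δ),
      intervalIntegral.integral_const_mul, integral_xi, intervalIntegral.integral_const,
      smul_eq_mul]
    ring
  have h := mul_rpow_neg_half_le_integral (by linarith [pi_pos])
    (by nlinarith [pi_lt_d2, pi_pos]) hbound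
    (intervalIntegrable_const.add (xi_intervalIntegrable.const_mul δ)) (by linarith) hmean
  rw [ge_iff_le]
  convert h using 1
  ring

theorem z_inv_sqrt_integral_full (δ : ℝ) (hδ0 : 0 < δ) (hδ1 : δ ≤ 1 / 2) :
    ∫ θ in (-(Real.pi / 2))..(Real.pi / 2), (1 + δ * xi θ) ^ (-(1 : ℝ) / 2) ≥
      Real.pi * (1 - δ) ^ (-(1 : ℝ) / 2) :=
  z_inv_sqrt_integral_full_general δ hδ1
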